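/- Let n ≥ 2 be an integer, 0 < h ≤ 1, and let f : ℝ → ℝ be of class C^{n−2} with all derivatives of order 0 through n−2 bounded in absolute value by M₀ on ℝ. Let F_j (2 ≤ j ≤ n) be the prolongation functions of f. Let q : [0,h] → ℝ be a 2n-times continuously differentiable solution of q̈(t) = f(q(t)) with |q^{(2n)}(t)| ≤ M on [0,h], and let q_d be a real polynomial of degree at most 2n−1 satisfying q_d(0) = q(0), q_d(h) = q(h), and the prolongation-collocation conditions q_d^{(j)}(τ) = F_j(q_d(τ), q̇_d(τ)) for all j = 2, …, n and τ ∈ {0, h}. Let R > 0 be such that |q̇(τ)| ≤ R and |q̇_d(τ)| ≤ R for τ ∈ {0,h}, and suppose there exist constants K > 0 and p ≥ 1 such that |q̇_d(τ) − q̇(τ)| ≤ K h^p for τ ∈ {0, h}. Then there exists a constant C > 0 depending only on n, M₀, M, R, and K such that | (q̇_d(h) − q̇(h)) − (q̇_d(0) − q̇(0)) | ≤ C h^{min(p+2, 2n−1)}. -/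

import Mathlib

/-!
Write `e = q_d - q`. Each `F_j` is a polynomial in `v` whose coefficients are polynomials in the
derivatives of `f` of order at most `j - 2`, so on `|v| ≤ R` it is Lipschitz in `v` with a constant
depending only on `j`, `M₀`, `R`. Since `q^{(j)} = F_j(q, q̇)`, the collocation conditions and
`q_d = q` at the endpoints give `ë = 0` and `e^{(j)} = O(K h^p)` there for `3 ≤ j ≤ n`.
Integrating `e^{(2n)} = -q^{(2n)}` against the bump `ψ(t) = (t (t - h))^{n-1}` by parts `2n` times,
the integral is `O(M h^{2n-1})`, while among the boundary terms `± e^{(2n-1-k)} ψ^{(k)}` those with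
`k < n - 1` or `k = 2n - 1` vanish, the one with `k = 2n - 3` vanishes because `ë = 0`, the one
with `k = 2n - 2` is `(2n-2)! (ė(h) - ė(0))`, and the others are `O(h^p · h^2)`.
-/

/-- `prolong f k` is the prolongation function `F_{k+2}`. -/
noncomputable def prolong (f : ℝ → ℝ) : ℕ → ℝ → ℝ → ℝ
  | 0, x, _ => f x
  | (k + 1), x, v =>
      v * deriv (fun y => prolong f k y v) x + f x * deriv (fun w => prolong f k x w) v

/-- Differential polynomials in `v` and the derivatives `f^{(b)}(x)`. They are kept as syntax so
that the bounds `bound` and `lipConst` read off an expression do not depend on `f`. -/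
inductive DiffExpr where
  | const : ℝ → DiffExpr
  | vel : DiffExpr
  | iterDeriv : ℕ → DiffExpr
  | add : DiffExpr → DiffExpr → DiffExpr
  | mul : DiffExpr → DiffExpr → DiffExpr

namespace DiffExpr

noncomputable def eval (f : ℝ → ℝ) : DiffExpr → ℝ → ℝ → ℝ
  | const r, _, _ => r
  | vel, _, v => v
  | iterDeriv b, x, _ => iteratedDeriv b f x
  | add e₁ e₂, x, v => eval f e₁ x v + eval f e₂ x v
  | mul e₁ e₂, x, v => eval f e₁ x v * eval f e₂ x v

def order : DiffExpr → ℕ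
  | const _ | vel => 0
  | iterDeriv b => b
  | add e₁ e₂ | mul e₁ e₂ => max (order e₁) (order e₂)

def dx : DiffExpr → DiffExpr
  | const _ | vel => const 0
  | iterDeriv b => iterDeriv (b + 1)
  | add e₁ e₂ => add (dx e₁) (dx e₂)
  | mul e₁ e₂ => add (mul (dx e₁) e₂) (mul e₁ (dx e₂))

def dv : DiffExpr → DiffExpr
  | const _ | iterDeriv _ => const 0
  | vel => const 1
  | add e₁ e₂ => add (dv e₁) (dv e₂)
  | mul e₁ e₂ => add (mul (dv e₁) e₂) (mul e₁ (dv e₂))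

theorem order_dx_le (e : DiffExpr) : order (dx e) ≤ order e + 1 := by
  induction e <;> simp [dx, order, *] <;> omega

theorem order_dv_le (e : DiffExpr) : order (dv e) ≤ order e := by
  induction e <;> simp [dv, order, *] <;> omega

variable {f : ℝ → ℝ} {m : ℕ}

theorem hasDerivWithinAt_eval_comp (hf : ContDiff ℝ (m : ℕ∞) f) {e : DiffExpr}
    (he : order e < m) {a b : ℝ → ℝ} {a' b' : ℝ} {s : Set ℝ} {t : ℝ}
    (ha : HasDerivWithinAt a a' s t) (hb : HasDerivWithinAt b b' s t) :
    HasDerivWithinAt (fun u => eval f e (a u) (b u))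
      (eval f (dx e) (a t) (b t) * a' + eval f (dv e) (a t) (b t) * b') s t := by
  induction e with
  | const r => simpa [eval, dx, dv] using hasDerivWithinAt_const t s r
  | vel => simpa [eval, dx, dv] using hb
  | iterDeriv k =>
    have hk : HasDerivAt (iteratedDeriv k f) (iteratedDeriv (k + 1) f (a t)) (a t) := by
      rw [iteratedDeriv_succ]
      exact ((hf.differentiable_iteratedDeriv k (by exact_mod_cast he)) _).hasDerivAt
    exact (hk.comp_hasDerivWithinAt t ha).congr_deriv (by simp [eval, dx, dv])
  | add e₁ e₂ ih₁ ih₂ =>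
    simp only [order, max_lt_iff] at he
    exact ((ih₁ he.1).add (ih₂ he.2)).congr_deriv (by simp only [eval, dx, dv]; ring)
  | mul e₁ e₂ ih₁ ih₂ =>
    simp only [order, max_lt_iff] at he
    exact ((ih₁ he.1).mul (ih₂ he.2)).congr_deriv (by simp only [eval, dx, dv]; ring)

def bound (B R : ℝ) : DiffExpr → ℝ
  | const r => |r|
  | vel => R
  | iterDeriv _ => B
  | add e₁ e₂ => bound B R e₁ + bound B R e₂
  | mul e₁ e₂ => bound B R e₁ * bound B R e₂

def lipConst (B R : ℝ) : DiffExpr → ℝ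
  | const _ | iterDeriv _ => 0
  | vel => 1
  | add e₁ e₂ => lipConst B R e₁ + lipConst B R e₂
  | mul e₁ e₂ => bound B R e₁ * lipConst B R e₂ + bound B R e₂ * lipConst B R e₁

theorem bound_nonneg {B R : ℝ} (hB : 0 ≤ B) (hR : 0 ≤ R) (e : DiffExpr) : 0 ≤ bound B R e := by
  induction e <;> simp only [bound] <;> positivity

theorem lipConst_nonneg {B R : ℝ} (hB : 0 ≤ B) (hR : 0 ≤ R) (e : DiffExpr) :
    0 ≤ lipConst B R e := by
  induction e with
  | mul e₁ e₂ ih₁ ih₂ =>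
    have := bound_nonneg hB hR e₁
    have := bound_nonneg hB hR e₂
    simp only [lipConst]; positivity
  | _ => simp only [lipConst]; positivity

variable {B R : ℝ}

theorem abs_eval_le (hB : ∀ i ≤ m, ∀ x, |iteratedDeriv i f x| ≤ B) {e : DiffExpr}
    (he : order e ≤ m) (x : ℝ) {v : ℝ} (hv : |v| ≤ R) : |eval f e x v| ≤ bound B R e := by
  induction e with
  | const r => exact le_rfl
  | vel => exact hv
  | iterDeriv k => exact hB k he x
  | add e₁ e₂ ih₁ ih₂ =>
    simp only [order, max_le_iff] at he
    exact (abs_add_le _ _).trans (add_le_add (ih₁ he.1) (ih₂ he.2))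
  | mul e₁ e₂ ih₁ ih₂ =>
    simp only [order, max_le_iff] at he
    rw [eval, abs_mul]
    exact mul_le_mul (ih₁ he.1) (ih₂ he.2) (abs_nonneg _) ((abs_nonneg _).trans (ih₁ he.1))

theorem abs_eval_sub_le (hB : ∀ i ≤ m, ∀ x, |iteratedDeriv i f x| ≤ B) {e : DiffExpr}
    (he : order e ≤ m) (x : ℝ) {v w : ℝ} (hv : |v| ≤ R) (hw : |w| ≤ R) :
    |eval f e x v - eval f e x w| ≤ lipConst B R e * |v - w| := by
  induction e with
  | const r => simp [eval, lipConst]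
  | vel => simp [eval, lipConst]
  | iterDeriv k => simp [eval, lipConst]
  | add e₁ e₂ ih₁ ih₂ =>
    simp only [order, max_le_iff] at he
    calc |eval f (add e₁ e₂) x v - eval f (add e₁ e₂) x w|
        = |(eval f e₁ x v - eval f e₁ x w) + (eval f e₂ x v - eval f e₂ x w)| := by
          simp only [eval]; ring_nf
      _ ≤ lipConst B R e₁ * |v - w| + lipConst B R e₂ * |v - w| :=
          (abs_add_le _ _).trans (add_le_add (ih₁ he.1) (ih₂ he.2))
      _ = lipConst B R (add e₁ e₂) * |v - w| := by simp only [lipConst]; ring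
  | mul e₁ e₂ ih₁ ih₂ =>
    simp only [order, max_le_iff] at he
    have hb₁ := abs_eval_le hB he.1 x hv
    have hb₂ := abs_eval_le hB he.2 x hw
    calc |eval f (mul e₁ e₂) x v - eval f (mul e₁ e₂) x w|
        = |eval f e₁ x v * (eval f e₂ x v - eval f e₂ x w)
            + eval f e₂ x w * (eval f e₁ x v - eval f e₁ x w)| := by
          simp only [eval]; ring_nf
      _ ≤ bound B R e₁ * (lipConst B R e₂ * |v - w|)
            + bound B R e₂ * (lipConst B R e₁ * |v - w|) := by
          refine (abs_add_le _ _).trans (add_le_add ?_ ?_) <;> rw [abs_mul]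
          · exact mul_le_mul hb₁ (ih₂ he.2) (abs_nonneg _) ((abs_nonneg _).trans hb₁)
          · exact mul_le_mul hb₂ (ih₁ he.1) (abs_nonneg _) ((abs_nonneg _).trans hb₂)
      _ = lipConst B R (mul e₁ e₂) * |v - w| := by simp only [lipConst]; ring

end DiffExpr

open DiffExpr

theorem ContDiffOn.hasDerivWithinAt_iteratedDerivWithin {N : WithTop ℕ∞} {q : ℝ → ℝ}
    {s : Set ℝ} (hq : ContDiffOn ℝ N q s) (hs : UniqueDiffOn ℝ s) {j : ℕ}
    (hj : (j : WithTop ℕ∞) < N) {t : ℝ} (ht : t ∈ s) :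
    HasDerivWithinAt (iteratedDerivWithin j q s) (iteratedDerivWithin (j + 1) q s t) s t := by
  rw [iteratedDerivWithin_succ]
  exact (hq.differentiableOn_iteratedDerivWithin hj hs t ht).hasDerivWithinAt

section Prolongation

def prolongExpr : ℕ → DiffExpr
  | 0 => iterDeriv 0
  | k + 1 => add (mul vel (dx (prolongExpr k))) (mul (iterDeriv 0) (dv (prolongExpr k)))

theorem order_prolongExpr_le (k : ℕ) : order (prolongExpr k) ≤ k := by
  induction k with
  | zero => simp [prolongExpr, order]
  | succ k ih =>
    simp only [prolongExpr, order, max_le_iff]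
    exact ⟨⟨by omega, (order_dx_le _).trans (by omega)⟩, by omega, (order_dv_le _).trans (by omega)⟩

variable {f : ℝ → ℝ} {m : ℕ}

theorem prolong_eq_eval (hf : ContDiff ℝ (m : ℕ∞) f) {k : ℕ} (hk : k ≤ m) (x v : ℝ) :
    prolong f k x v = eval f (prolongExpr k) x v := by
  induction k generalizing x v with
  | zero => simp [prolong, prolongExpr, eval]
  | succ k ih =>
    have hord : order (prolongExpr k) < m := (order_prolongExpr_le k).trans_lt hk
    have hx := hasDerivWithinAt_eval_comp hf hord (hasDerivAt_id x).hasDerivWithinAt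
      (hasDerivWithinAt_const x Set.univ v)
    have hv := hasDerivWithinAt_eval_comp hf hord (hasDerivWithinAt_const v Set.univ x)
      (hasDerivAt_id v).hasDerivWithinAt
    simp only [hasDerivWithinAt_univ, id, mul_one, mul_zero, add_zero, zero_add] at hx hv
    have ih' := fun y w => ih (by omega) y w
    simp only [prolong, ih', hx.deriv, hv.deriv, prolongExpr, eval, iteratedDeriv_zero]

theorem abs_prolong_sub_le {B R : ℝ} (hf : ContDiff ℝ (m : ℕ∞) f)
    (hB : ∀ i ≤ m, ∀ x, |iteratedDeriv i f x| ≤ B) {k : ℕ} (hk : k ≤ m) (x : ℝ) {v w : ℝ}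
    (hv : |v| ≤ R) (hw : |w| ≤ R) :
    |prolong f k x v - prolong f k x w| ≤ lipConst B R (prolongExpr k) * |v - w| := by
  rw [prolong_eq_eval hf hk, prolong_eq_eval hf hk]
  exact abs_eval_sub_le hB ((order_prolongExpr_le k).trans hk) x hv hw

theorem iteratedDerivWithin_eq_prolong (hf : ContDiff ℝ (m : ℕ∞) f) {s : Set ℝ}
    (hs : UniqueDiffOn ℝ s) {q : ℝ → ℝ} (hq : ContDiffOn ℝ 2 q s)
    (hq₂ : ∀ t ∈ s, iteratedDerivWithin 2 q s t = f (q t)) {k : ℕ} (hk : k ≤ m) {t : ℝ}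
    (ht : t ∈ s) :
    iteratedDerivWithin (k + 2) q s t = prolong f k (q t) (iteratedDerivWithin 1 q s t) := by
  induction k generalizing t with
  | zero => simp [hq₂ t ht, prolong]
  | succ k ih =>
    have hord : order (prolongExpr k) < m := (order_prolongExpr_le k).trans_lt hk
    have hq₀ : HasDerivWithinAt q (iteratedDerivWithin 1 q s t) s t := by
      simpa using hq.hasDerivWithinAt_iteratedDerivWithin hs (j := 0) (by norm_num) ht
    have hq₁ := hq.hasDerivWithinAt_iteratedDerivWithin hs (j := 1) (by norm_num) ht
    have hprolong : ∀ u ∈ s, iteratedDerivWithin (k + 2) q s u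
        = eval f (prolongExpr k) (q u) (iteratedDerivWithin 1 q s u) := fun u hu =>
      (ih (by omega) hu).trans (prolong_eq_eval hf (by omega) _ _)
    rw [iteratedDerivWithin_succ, derivWithin_congr hprolong (hprolong t ht),
      (hasDerivWithinAt_eval_comp hf hord hq₀ hq₁).derivWithin (hs t ht), prolong_eq_eval hf hk]
    simp only [prolongExpr, eval, iteratedDeriv_zero, hq₂ t ht]
    ring

end Prolongation

open Polynomial
open scoped Nat

noncomputable def bump (d : ℕ) : ℝ[X] := (X * (X - C 1)) ^ d

theorem bump_monic (d : ℕ) : (bump d).Monic := (monic_X.mul (monic_X_sub_C 1)).pow d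

theorem natDegree_bump (d : ℕ) : (bump d).natDegree = 2 * d := by
  rw [bump, natDegree_pow, natDegree_mul X_ne_zero (X_sub_C_ne_zero 1), natDegree_X,
    natDegree_X_sub_C, mul_comm]

theorem eval_iterate_derivative_bump_of_lt {d k : ℕ} (hk : k < d) {x : ℝ} (hx : x = 0 ∨ x = 1) :
    (derivative^[k] (bump d)).eval x = 0 := by
  have hdvd : (X - C x) ^ d ∣ bump d := by
    rcases hx with rfl | rfl
    · exact ⟨(X - C 1) ^ d, by rw [bump, mul_pow, map_zero, sub_zero]⟩
    · exact ⟨X ^ d, by rw [bump, mul_pow, mul_comm]⟩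
  exact isRoot_iterate_derivative_of_lt_rootMultiplicity
    (hk.trans_le ((le_rootMultiplicity_iff (bump_monic d).ne_zero).2 hdvd))

theorem iterate_derivative_bump_two_mul (d : ℕ) :
    derivative^[2 * d] (bump d) = C ((2 * d)! : ℝ) := by
  have hdeg : (derivative^[2 * d] (bump d)).natDegree ≤ 0 :=
    (natDegree_iterate_derivative _ _).trans (by rw [natDegree_bump, Nat.sub_self])
  rw [eq_C_of_natDegree_le_zero hdeg, coeff_iterate_derivative, zero_add, Nat.descFactorial_self,
    ← natDegree_bump d, ← leadingCoeff, (bump_monic d).leadingCoeff, nsmul_one]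

theorem abs_eval_bump_le_one (d : ℕ) {x : ℝ} (hx₀ : 0 ≤ x) (hx₁ : x ≤ 1) :
    |(bump d).eval x| ≤ 1 := by
  have hx : |x * (x - 1)| ≤ 1 := by
    rw [abs_le]; constructor <;> nlinarith
  simpa [bump, abs_pow] using pow_le_one₀ (abs_nonneg _) hx

noncomputable def scaledBump (d : ℕ) (h : ℝ) : ℝ[X] :=
  C (h ^ (2 * d)) * (bump d).comp (C h⁻¹ * X)

theorem iterate_derivative_scaledBump (d : ℕ) (h : ℝ) (k : ℕ) :
    derivative^[k] (scaledBump d h) =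
      C (h ^ (2 * d) * h⁻¹ ^ k) * (derivative^[k] (bump d)).comp (C h⁻¹ * X) := by
  induction k with
  | zero => simp [scaledBump]
  | succ k ih =>
    rw [Function.iterate_succ_apply', ih, derivative_C_mul, derivative_comp,
      Function.iterate_succ_apply']
    simp only [derivative_mul, derivative_C, derivative_X, zero_mul, zero_add, mul_one, pow_succ,
      C_mul]
    ring

theorem eval_iterate_derivative_scaledBump (d : ℕ) (h : ℝ) (k : ℕ) (t : ℝ) :
    (derivative^[k] (scaledBump d h)).eval t =
      h ^ (2 * d) * h⁻¹ ^ k * (derivative^[k] (bump d)).eval (h⁻¹ * t) := by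
  simp [iterate_derivative_scaledBump, eval_comp]

theorem iterate_derivative_scaledBump_eq_zero (d : ℕ) (h : ℝ) :
    derivative^[2 * d + 1] (scaledBump d h) = 0 := by
  rw [iterate_derivative_scaledBump, iterate_derivative_eq_zero (by rw [natDegree_bump]; omega),
    zero_comp, mul_zero]

theorem inv_mul_eq_zero_or_one {h τ : ℝ} (hh : h ≠ 0) (hτ : τ ∈ ({0, h} : Set ℝ)) :
    h⁻¹ * τ = 0 ∨ h⁻¹ * τ = 1 := by
  rcases hτ with rfl | rfl
  · exact .inl (mul_zero _)
  · exact .inr (inv_mul_cancel₀ hh)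

theorem eval_iterate_derivative_scaledBump_endpoint_of_lt {d k : ℕ} (hk : k < d) {h τ : ℝ}
    (hh : h ≠ 0) (hτ : τ ∈ ({0, h} : Set ℝ)) : (derivative^[k] (scaledBump d h)).eval τ = 0 := by
  rw [eval_iterate_derivative_scaledBump,
    eval_iterate_derivative_bump_of_lt hk (inv_mul_eq_zero_or_one hh hτ), mul_zero]

theorem eval_iterate_derivative_scaledBump_two_mul (d : ℕ) {h : ℝ} (hh : h ≠ 0) (t : ℝ) :
    (derivative^[2 * d] (scaledBump d h)).eval t = (2 * d)! := by
  rw [eval_iterate_derivative_scaledBump, iterate_derivative_bump_two_mul, eval_C, ← mul_pow,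
    mul_inv_cancel₀ hh, one_pow, one_mul]

noncomputable def bumpConst (d : ℕ) : ℝ :=
  ∑ k ∈ Finset.range (2 * d + 1),
    (|(derivative^[k] (bump d)).eval 0| + |(derivative^[k] (bump d)).eval 1|)

theorem bumpConst_nonneg (d : ℕ) : 0 ≤ bumpConst d :=
  Finset.sum_nonneg fun _ _ => by positivity

theorem abs_eval_iterate_derivative_bump_endpoint_le {d k : ℕ} (hk : k ≤ 2 * d) {x : ℝ}
    (hx : x = 0 ∨ x = 1) : |(derivative^[k] (bump d)).eval x| ≤ bumpConst d := by
  refine le_trans ?_ (Finset.single_le_sum (f := fun k =>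
    |(derivative^[k] (bump d)).eval 0| + |(derivative^[k] (bump d)).eval 1|)
    (fun _ _ => by positivity) (Finset.mem_range.2 (Nat.lt_succ_of_le hk)))
  rcases hx with rfl | rfl
  · exact le_add_of_nonneg_right (abs_nonneg _)
  · exact le_add_of_nonneg_left (abs_nonneg _)

theorem abs_eval_iterate_derivative_scaledBump_endpoint_le {d k : ℕ} (hk : k ≤ 2 * d) {h τ : ℝ}
    (hh : 0 < h) (hτ : τ ∈ ({0, h} : Set ℝ)) :
    |(derivative^[k] (scaledBump d h)).eval τ| ≤ bumpConst d * h ^ (2 * d - k) := by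
  rw [eval_iterate_derivative_scaledBump, inv_pow, ← pow_sub₀ h hh.ne' hk, abs_mul,
    abs_of_pos (pow_pos hh _), mul_comm]
  exact mul_le_mul_of_nonneg_right
    (abs_eval_iterate_derivative_bump_endpoint_le hk (inv_mul_eq_zero_or_one hh.ne' hτ))
    (by positivity)

theorem abs_eval_scaledBump_le (d : ℕ) {h t : ℝ} (hh : 0 < h) (ht : t ∈ Set.Icc 0 h) :
    |(scaledBump d h).eval t| ≤ h ^ (2 * d) := by
  have hx₀ : 0 ≤ h⁻¹ * t := mul_nonneg (inv_nonneg.2 hh.le) ht.1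
  have hx₁ : h⁻¹ * t ≤ 1 := by rw [inv_mul_le_iff₀ hh, mul_one]; exact ht.2
  rw [scaledBump, eval_mul, eval_C, eval_comp, eval_mul, eval_C, eval_X, abs_mul,
    abs_of_pos (pow_pos hh _)]
  simpa using
    mul_le_mul_of_nonneg_left (abs_eval_bump_le_one d hx₀ hx₁) (pow_nonneg hh.le (2 * d))

noncomputable def altSum (N : ℕ) (u w : ℕ → ℝ → ℝ) (t : ℝ) : ℝ :=
  ∑ k ∈ Finset.range N, (-1) ^ k * (u (N - 1 - k) t * w k t)

theorem hasDerivWithinAt_altSum {N : ℕ} {u w : ℕ → ℝ → ℝ} {s : Set ℝ} {t : ℝ}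
    (hu : ∀ j < N, HasDerivWithinAt (u j) (u (j + 1) t) s t)
    (hw : ∀ j < N, HasDerivWithinAt (w j) (w (j + 1) t) s t) :
    HasDerivWithinAt (altSum N u w) (u N t * w 0 t - (-1) ^ N * (u 0 t * w N t)) s t := by
  let a : ℕ → ℝ := fun k => (-1) ^ k * (u (N - k) t * w k t)
  have hterm : ∀ k ∈ Finset.range N,
      HasDerivWithinAt (fun x => (-1) ^ k * (u (N - 1 - k) x * w k x)) (a k - a (k + 1)) s t := by
    intro k hk
    have hk := Finset.mem_range.1 hk
    have hprod := (((hu (N - 1 - k) (by omega)).mul (hw k hk)).const_mul ((-1 : ℝ) ^ k))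
    rw [show N - 1 - k + 1 = N - k by omega] at hprod
    refine hprod.congr_deriv ?_
    simp only [a, show N - (k + 1) = N - 1 - k by omega, pow_succ]
    ring
  have hsum := HasDerivWithinAt.fun_sum hterm
  rw [Finset.sum_range_sub'] at hsum
  exact hsum.congr_deriv (by simp [a])

theorem abs_altSum_scaledBump_term_le {n k : ℕ} (hk : k < 2 * n) (hk' : k ≠ 2 * n - 2)
    {h τ δ : ℝ} (hh₀ : 0 < h) (hh₁ : h ≤ 1) (hτ : τ ∈ ({0, h} : Set ℝ)) (hδ : 0 ≤ δ)
    {E : ℕ → ℝ → ℝ} (hE₂ : E 2 τ = 0) (hE : ∀ j, 3 ≤ j → j ≤ n → |E j τ| ≤ δ) :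
    |(-1) ^ k * (E (2 * n - 1 - k) τ * (derivative^[k] (scaledBump (n - 1) h)).eval τ)| ≤
      δ * bumpConst (n - 1) * h ^ 2 := by
  have hrhs : 0 ≤ δ * bumpConst (n - 1) * h ^ 2 := by
    have := bumpConst_nonneg (n - 1)
    positivity
  rw [abs_mul, abs_pow, abs_neg, abs_one, one_pow, one_mul, abs_mul]
  rcases lt_or_ge k (n - 1) with hlow | hlow
  · rw [eval_iterate_derivative_scaledBump_endpoint_of_lt hlow hh₀.ne' hτ, abs_zero, mul_zero]
    exact hrhs
  obtain rfl | hk2 := eq_or_ne k (2 * n - 1)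
  · rw [show 2 * n - 1 = 2 * (n - 1) + 1 by omega, iterate_derivative_scaledBump_eq_zero,
      eval_zero, abs_zero, mul_zero]
    exact hrhs
  obtain rfl | hk3 := eq_or_ne k (2 * n - 3)
  · rw [show 2 * n - 1 - (2 * n - 3) = 2 by omega, hE₂, abs_zero, zero_mul]
    exact hrhs
  have hψ := abs_eval_iterate_derivative_scaledBump_endpoint_le (d := n - 1) (k := k)
    (by omega) hh₀ hτ
  have hpow : h ^ (2 * (n - 1) - k) ≤ h ^ 2 := pow_le_pow_of_le_one hh₀.le hh₁ (by omega)
  calc |E (2 * n - 1 - k) τ| * |(derivative^[k] (scaledBump (n - 1) h)).eval τ|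
      ≤ δ * (bumpConst (n - 1) * h ^ 2) :=
        mul_le_mul (hE _ (by omega) (by omega)) 
          (hψ.trans (mul_le_mul_of_nonneg_left hpow (bumpConst_nonneg _))) (abs_nonneg _) hδ
    _ = δ * bumpConst (n - 1) * h ^ 2 := by ring

theorem abs_altSum_scaledBump_sub_le {n : ℕ} (hn : 2 ≤ n) {h τ δ : ℝ} (hh₀ : 0 < h)
    (hh₁ : h ≤ 1) (hτ : τ ∈ ({0, h} : Set ℝ)) (hδ : 0 ≤ δ) {E : ℕ → ℝ → ℝ} (hE₂ : E 2 τ = 0)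
    (hE : ∀ j, 3 ≤ j → j ≤ n → |E j τ| ≤ δ) :
    |altSum (2 * n) E (fun k t => (derivative^[k] (scaledBump (n - 1) h)).eval t) τ
        - (2 * (n - 1))! * E 1 τ| ≤ 2 * n * (δ * bumpConst (n - 1) * h ^ 2) := by
  have hmem : 2 * (n - 1) ∈ Finset.range (2 * n) := Finset.mem_range.2 (by omega)
  have hmain : (-1) ^ (2 * (n - 1)) * (E (2 * n - 1 - 2 * (n - 1)) τ *
      (derivative^[2 * (n - 1)] (scaledBump (n - 1) h)).eval τ) = (2 * (n - 1))! * E 1 τ := by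
    rw [show 2 * n - 1 - 2 * (n - 1) = 1 by omega,
      eval_iterate_derivative_scaledBump_two_mul _ hh₀.ne', (even_two_mul _).neg_one_pow]
    ring
  rw [altSum, ← Finset.add_sum_erase _ _ hmem, hmain, add_sub_cancel_left]
  calc _ ≤ ∑ k ∈ (Finset.range (2 * n)).erase (2 * (n - 1)),
        |(-1) ^ k * (E (2 * n - 1 - k) τ * (derivative^[k] (scaledBump (n - 1) h)).eval τ)| :=
        Finset.abs_sum_le_sum_abs _ _
    _ ≤ ((Finset.range (2 * n)).erase (2 * (n - 1))).card •
          (δ * bumpConst (n - 1) * h ^ 2) := by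
        refine Finset.sum_le_card_nsmul _ _ _ fun k hk => ?_
        obtain ⟨hk', hk⟩ := Finset.mem_erase.1 hk
        exact abs_altSum_scaledBump_term_le (Finset.mem_range.1 hk) (by omega) hh₀ hh₁ hτ hδ hE₂ hE
    _ ≤ 2 * n * (δ * bumpConst (n - 1) * h ^ 2) := by
        rw [nsmul_eq_mul]
        gcongr
        · exact mul_nonneg (mul_nonneg hδ (bumpConst_nonneg _)) (by positivity)
        · exact_mod_cast (Finset.card_erase_le).trans (Finset.card_range _).le

theorem factorial_mul_abs_sub_le_of_derivChain {n : ℕ} (hn : 2 ≤ n) {h M δ : ℝ} (hh₀ : 0 < h)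
    (hh₁ : h ≤ 1) (hδ : 0 ≤ δ) {E : ℕ → ℝ → ℝ}
    (hE : ∀ j < 2 * n, ∀ t ∈ Set.Icc 0 h, HasDerivWithinAt (E j) (E (j + 1) t) (Set.Icc 0 h) t)
    (hE_top : ∀ t ∈ Set.Icc 0 h, |E (2 * n) t| ≤ M)
    (hE₂ : ∀ τ ∈ ({0, h} : Set ℝ), E 2 τ = 0)
    (hE_small : ∀ j, 3 ≤ j → j ≤ n → ∀ τ ∈ ({0, h} : Set ℝ), |E j τ| ≤ δ) :
    (2 * (n - 1))! * |E 1 h - E 1 0| ≤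
      M * h ^ (2 * n - 1) + 4 * n * (δ * bumpConst (n - 1) * h ^ 2) := by
  have h₀ := abs_altSum_scaledBump_sub_le hn hh₀ hh₁ (by simp) hδ (hE₂ 0 (by simp))
    fun j hj₃ hjn => hE_small j hj₃ hjn 0 (by simp)
  have h₁ := abs_altSum_scaledBump_sub_le hn hh₀ hh₁ (by simp) hδ (hE₂ h (by simp))
    fun j hj₃ hjn => hE_small j hj₃ hjn h (by simp)
  set ψ : ℕ → ℝ → ℝ := fun k t => (derivative^[k] (scaledBump (n - 1) h)).eval t
  set Φ := altSum (2 * n) E ψ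
  have hΦ : ∀ t ∈ Set.Icc 0 h,
      HasDerivWithinAt Φ (E (2 * n) t * (scaledBump (n - 1) h).eval t) (Set.Icc 0 h) t := by
    intro t ht
    have hψ : ∀ k, HasDerivWithinAt (ψ k) (ψ (k + 1) t) (Set.Icc 0 h) t := fun k => by
      simp only [ψ, Function.iterate_succ_apply']
      exact (Polynomial.hasDerivAt _ t).hasDerivWithinAt
    have hψ_top : ψ (2 * n) t = 0 := by
      simp only [ψ]
      rw [show 2 * n = 1 + (2 * (n - 1) + 1) by omega, Function.iterate_add_apply,
        iterate_derivative_scaledBump_eq_zero, iterate_derivative_zero, eval_zero]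
    exact (hasDerivWithinAt_altSum (fun j hj => hE j hj t ht) (fun j _ => hψ j)).congr_deriv
      (by simp [ψ, hψ_top])
  have hΦ_le : |Φ h - Φ 0| ≤ M * h ^ (2 * n - 1) := by
    have hbound : ∀ t ∈ Set.Icc 0 h,
        ‖E (2 * n) t * (scaledBump (n - 1) h).eval t‖ ≤ M * h ^ (2 * (n - 1)) := fun t ht => by
      rw [Real.norm_eq_abs, abs_mul]
      exact mul_le_mul (hE_top t ht) (abs_eval_scaledBump_le _ hh₀ ht) (abs_nonneg _)
        ((abs_nonneg _).trans (hE_top t ht))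
    have := (convex_Icc 0 h).norm_image_sub_le_of_norm_hasDerivWithin_le hΦ hbound
      (Set.left_mem_Icc.2 hh₀.le) (Set.right_mem_Icc.2 hh₀.le)
    rw [Real.norm_eq_abs, Real.norm_eq_abs, sub_zero, abs_of_pos hh₀, mul_assoc, ← pow_succ,
      show 2 * (n - 1) + 1 = 2 * n - 1 by omega] at this
    exact this
  set c : ℝ := (((2 * (n - 1))! : ℕ) : ℝ)
  have hc : 0 ≤ c := Nat.cast_nonneg _
  calc c * |E 1 h - E 1 0|
      = |(Φ h - Φ 0) - (Φ h - c * E 1 h) + (Φ 0 - c * E 1 0)| := by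
        rw [← abs_of_nonneg hc, ← abs_mul, abs_of_nonneg hc]
        ring_nf
    _ ≤ |Φ h - Φ 0| + |Φ h - c * E 1 h| + |Φ 0 - c * E 1 0| :=
        (abs_add_le _ _).trans (add_le_add_left (abs_sub _ _) _)
    _ ≤ M * h ^ (2 * n - 1) + 4 * n * (δ * bumpConst (n - 1) * h ^ 2) := by linarith

theorem abs_prolong_sub_iteratedDerivWithin_le {f : ℝ → ℝ} {m : ℕ} {B R : ℝ}
    (hf : ContDiff ℝ (m : ℕ∞) f) (hB : ∀ i ≤ m, ∀ x, |iteratedDeriv i f x| ≤ B) {s : Set ℝ}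
    (hs : UniqueDiffOn ℝ s) {q : ℝ → ℝ} (hq : ContDiffOn ℝ 2 q s)
    (hq₂ : ∀ t ∈ s, iteratedDerivWithin 2 q s t = f (q t)) {k : ℕ} (hk : k ≤ m) {t v : ℝ}
    (ht : t ∈ s) (hv : |v| ≤ R) (hq₁ : |iteratedDerivWithin 1 q s t| ≤ R) :
    |prolong f k (q t) v - iteratedDerivWithin (k + 2) q s t| ≤
      lipConst B R (prolongExpr k) * |v - iteratedDerivWithin 1 q s t| := by
  rw [iteratedDerivWithin_eq_prolong hf hs hq hq₂ hk ht]
  exact abs_prolong_sub_le hf hB hk (q t) hv hq₁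

theorem rpow_min_ge_of_le_one {h : ℝ} (hh₀ : 0 < h) (hh₁ : h ≤ 1) {n : ℕ} (hn : 1 ≤ n) (p : ℝ) :
    h ^ (2 * n - 1) ≤ h ^ min (p + 2) (2 * n - 1 : ℝ) ∧
      h ^ p * h ^ 2 ≤ h ^ min (p + 2) (2 * n - 1 : ℝ) := by
  constructor
  · rw [← Real.rpow_natCast, Nat.cast_sub (by omega), Nat.cast_mul, Nat.cast_ofNat, Nat.cast_one]
    exact Real.rpow_le_rpow_of_exponent_ge hh₀ hh₁ (min_le_right _ _)
  · rw [← Real.rpow_two, ← Real.rpow_add hh₀]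
    exact Real.rpow_le_rpow_of_exponent_ge hh₀ hh₁ (min_le_left _ _)

theorem factorial_mul_abs_velocity_defect_sub_le {n : ℕ} (hn : 2 ≤ n) {M₀ M R ε h : ℝ}
    (hh₀ : 0 < h) (hh₁ : h ≤ 1) {f : ℝ → ℝ} (hf : ContDiff ℝ ((n - 2 : ℕ) : ℕ∞) f)
    (hM₀ : ∀ i ≤ n - 2, ∀ x : ℝ, |iteratedDeriv i f x| ≤ M₀) {q : ℝ → ℝ}
    (hq : ContDiffOn ℝ ((2 * n : ℕ) : ℕ∞) q (Set.Icc 0 h))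
    (hq₂ : ∀ t ∈ Set.Icc (0 : ℝ) h, iteratedDerivWithin 2 q (Set.Icc 0 h) t = f (q t))
    (hq_top : ∀ t ∈ Set.Icc (0 : ℝ) h, |iteratedDerivWithin (2 * n) q (Set.Icc 0 h) t| ≤ M)
    {qd : ℝ[X]} (hdeg : qd.natDegree ≤ 2 * n - 1) (hqd₀ : qd.eval 0 = q 0)
    (hqd_h : qd.eval h = q h)
    (hcol : ∀ j : ℕ, 2 ≤ j → j ≤ n → ∀ τ ∈ ({0, h} : Set ℝ),
      (derivative^[j] qd).eval τ = prolong f (j - 2) (qd.eval τ) ((derivative qd).eval τ))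
    (hqR : ∀ τ ∈ ({0, h} : Set ℝ), |iteratedDerivWithin 1 q (Set.Icc 0 h) τ| ≤ R)
    (hqdR : ∀ τ ∈ ({0, h} : Set ℝ), |(derivative qd).eval τ| ≤ R)
    (hε : ∀ τ ∈ ({0, h} : Set ℝ),
      |(derivative qd).eval τ - iteratedDerivWithin 1 q (Set.Icc 0 h) τ| ≤ ε) :
    (2 * (n - 1))! * |((derivative qd).eval h - iteratedDerivWithin 1 q (Set.Icc 0 h) h) -
        ((derivative qd).eval 0 - iteratedDerivWithin 1 q (Set.Icc 0 h) 0)| ≤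
      M * h ^ (2 * n - 1) + 4 * n * ((∑ k ∈ Finset.range (n - 1),
        lipConst M₀ R (prolongExpr k)) * ε * bumpConst (n - 1) * h ^ 2) := by
  have hs : UniqueDiffOn ℝ (Set.Icc 0 h) := uniqueDiffOn_Icc hh₀
  have h0 : (0 : ℝ) ∈ ({0, h} : Set ℝ) := by simp
  have hτs : ∀ τ ∈ ({0, h} : Set ℝ), τ ∈ Set.Icc 0 h := by
    rintro τ (rfl | rfl); exacts [Set.left_mem_Icc.2 hh₀.le, Set.right_mem_Icc.2 hh₀.le]
  have hqd : ∀ τ ∈ ({0, h} : Set ℝ), qd.eval τ = q τ := by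
    rintro τ (rfl | rfl); exacts [hqd₀, hqd_h]
  have hLip : ∀ k, 0 ≤ lipConst M₀ R (prolongExpr k) := fun k => lipConst_nonneg
    ((abs_nonneg _).trans (hM₀ 0 (Nat.zero_le _) 0)) ((abs_nonneg _).trans (hqR 0 h0)) _
  simpa only [Function.iterate_one, mul_assoc] using
    factorial_mul_abs_sub_le_of_derivChain hn hh₀ hh₁
    (E := fun j t => (derivative^[j] qd).eval t - iteratedDerivWithin j q (Set.Icc 0 h) t)
    (mul_nonneg (Finset.sum_nonneg fun k _ => hLip k) ((abs_nonneg _).trans (hε 0 h0)))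
    (fun j hj t ht => by
      rw [Function.iterate_succ_apply']
      exact (Polynomial.hasDerivAt _ t).hasDerivWithinAt.sub
        (hq.hasDerivWithinAt_iteratedDerivWithin hs (by exact_mod_cast hj) ht))
    (fun t ht => by
      rw [iterate_derivative_eq_zero (by omega), eval_zero, zero_sub, abs_neg]
      exact hq_top t ht)
    (fun τ hτ => by
      rw [hcol 2 le_rfl hn τ hτ, hq₂ τ (hτs τ hτ), hqd τ hτ, Nat.sub_self, prolong, sub_self])
    (fun j hj₃ hjn τ hτ => by
      obtain ⟨k, rfl⟩ : ∃ k, j = k + 2 := ⟨j - 2, by omega⟩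
      rw [hcol _ (by omega) hjn τ hτ, Nat.add_sub_cancel, hqd τ hτ]
      refine (abs_prolong_sub_iteratedDerivWithin_le hf hM₀ hs
        (hq.of_le (WithTop.coe_le_coe.2 (by exact_mod_cast (by omega : 2 ≤ 2 * n)))) hq₂
        (by omega) (hτs τ hτ) (hqdR τ hτ) (hqR τ hτ)).trans ?_
      exact mul_le_mul (Finset.single_le_sum (fun k _ => hLip k)
        (Finset.mem_range.2 (by omega))) (hε τ hτ) (abs_nonneg _)
        (Finset.sum_nonneg fun k _ => hLip k))

/-- **Bootstrap step for the endpoint velocity error of prolongation-collocation polynomials.**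
Let `n ≥ 2` and let `M₀`, `M`, `R`, `K` be bounds as below.  There is a constant `C > 0`,
depending only on `n`, `M₀`, `M`, `R`, `K`, such that for every `0 < h ≤ 1`, every `p ≥ 1`,
every `f` of class `C^{n-2}` with derivatives of orders `0, …, n-2` bounded by `M₀`, every
`2n`-times continuously differentiable solution `q` of `q̈ = f(q)` on `[0, h]` with
`|q^{(2n)}| ≤ M`, and every polynomial `q_d` of degree at most `2n - 1` with `q_d(0) = q(0)`,
`q_d(h) = q(h)` satisfying the prolongation-collocation conditions at `τ ∈ {0, h}`, such that
`|q̇(τ)| ≤ R`, `|q̇_d(τ)| ≤ R` and `|q̇_d(τ) - q̇(τ)| ≤ K h^p` at both endpoints, one has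
`|(q̇_d(h) - q̇(h)) - (q̇_d(0) - q̇(0))| ≤ C h^{min(p+2, 2n-1)}`. -/
theorem velocity_defect_bootstrap
    (n : ℕ) (hn : 2 ≤ n) (M₀ M R K : ℝ) (hR : 0 < R) (hK : 0 < K) :
    ∃ C > 0,
      ∀ h : ℝ, 0 < h → h ≤ 1 →
      ∀ p : ℝ, 1 ≤ p →
      ∀ f : ℝ → ℝ, ContDiff ℝ ((n - 2 : ℕ) : ℕ∞) f →
        (∀ i ≤ n - 2, ∀ x : ℝ, |iteratedDeriv i f x| ≤ M₀) →
      ∀ q : ℝ → ℝ, ContDiffOn ℝ ((2 * n : ℕ) : ℕ∞) q (Set.Icc 0 h) →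
        (∀ t ∈ Set.Icc (0 : ℝ) h, iteratedDerivWithin 2 q (Set.Icc 0 h) t = f (q t)) →
        (∀ t ∈ Set.Icc (0 : ℝ) h, |iteratedDerivWithin (2 * n) q (Set.Icc 0 h) t| ≤ M) →
      ∀ qd : Polynomial ℝ, qd.natDegree ≤ 2 * n - 1 →
        qd.eval 0 = q 0 → qd.eval h = q h →
        (∀ j : ℕ, 2 ≤ j → j ≤ n → ∀ τ ∈ ({0, h} : Set ℝ),
          (Polynomial.derivative^[j] qd).eval τ =
            prolong f (j - 2) (qd.eval τ) ((Polynomial.derivative qd).eval τ)) →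
        (∀ τ ∈ ({0, h} : Set ℝ), |iteratedDerivWithin 1 q (Set.Icc 0 h) τ| ≤ R) →
        (∀ τ ∈ ({0, h} : Set ℝ), |(Polynomial.derivative qd).eval τ| ≤ R) →
        (∀ τ ∈ ({0, h} : Set ℝ),
          |(Polynomial.derivative qd).eval τ - iteratedDerivWithin 1 q (Set.Icc 0 h) τ| ≤
            K * h ^ p) →
        |((Polynomial.derivative qd).eval h - iteratedDerivWithin 1 q (Set.Icc 0 h) h) -
            ((Polynomial.derivative qd).eval 0 - iteratedDerivWithin 1 q (Set.Icc 0 h) 0)| ≤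
          C * h ^ (min (p + 2) (2 * n - 1 : ℝ)) := by
  set L : ℝ := ∑ k ∈ Finset.range (n - 1), lipConst (max M₀ 0) R (prolongExpr k)
  have hL : 0 ≤ L := Finset.sum_nonneg fun k _ => lipConst_nonneg (le_max_right _ _) hR.le _
  set c : ℝ := (((2 * (n - 1))! : ℕ) : ℝ)
  have hc : 0 < c := Nat.cast_pos.2 (Nat.factorial_pos _)
  have hB := bumpConst_nonneg (n - 1)
  refine ⟨(max M 0 + 4 * n * (L * K * bumpConst (n - 1))) / c + 1, by positivity, ?_⟩
  intro h hh₀ hh₁ p hp f hf hM₀ q hq hq₂ hq_top qd hdeg hqd₀ hqd_h hcol hqR hqdR hK_h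
  have key := factorial_mul_abs_velocity_defect_sub_le hn hh₀ hh₁ hf
    (fun i hi x => (hM₀ i hi x).trans (le_max_left M₀ 0)) hq hq₂ hq_top hdeg hqd₀ hqd_h hcol
    hqR hqdR hK_h
  obtain ⟨h₁, h₂⟩ := rpow_min_ge_of_le_one hh₀ hh₁ (by omega : 1 ≤ n) p
  set r := h ^ min (p + 2) (2 * n - 1 : ℝ)
  have hr : 0 ≤ r := Real.rpow_nonneg hh₀.le _
  have hM : M * h ^ (2 * n - 1) ≤ max M 0 * r :=
    mul_le_mul (le_max_left _ _) h₁ (by positivity) (le_max_right _ _)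
  have hD : 4 * n * (L * (K * h ^ p) * bumpConst (n - 1) * h ^ 2) ≤
      4 * n * (L * K * bumpConst (n - 1)) * r := by
    calc _ = 4 * n * (L * K * bumpConst (n - 1)) * (h ^ p * h ^ 2) := by ring
      _ ≤ _ := by gcongr
  rw [add_mul, one_mul, div_mul_eq_mul_div, add_mul]
  refine le_add_of_le_of_nonneg ((le_div_iff₀ hc).2 ?_) hr
  linarith
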